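/- arXiv:1310.6852 — 2 statements merged into one kernel-verified Lean document; each statement's English description precedes it below -/
import Mathlib

section
/- Let 0 < λ < 1/2 and let x, r satisfy 0 < r < x. Then for every z with cosh(x−r) ≤ z ≤ cosh(x+r) one has ∫_{−1}^{(cosh r − z·cosh x)/(√(z²−1)·sinh x)} (1−u²)^{λ−1} du ≤ (1/λ) · (sinh r / sinh x)^{2λ}. -/
/-!
The upper limit `T` is `-cos α` for the angle `α` opposite the side `r` of the hyperbolic
triangle with sides `x`, `r`, `arcosh z` (law of cosines); the bounds on `z` are the triangle
inequalities and give `-1 ≤ T ≤ 0`. On `[-1, 0]` we have `1 - u² ≥ 1 + u`, so for `λ ≤ 1` the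
integral is at most `∫_{-1}^T (1 + u)^(λ-1) du = (1 + T)^λ / λ`, and
`1 + T ≤ 1 - T² = sin² α ≤ (sinh r / sinh x)²` by the hyperbolic law of sines.
-/

open Real MeasureTheory Set

section AddOneRpow

variable {lam T : ℝ}

lemma intervalIntegrable_add_one_rpow (hlam : 0 < lam) :
    IntervalIntegrable (fun u : ℝ => (u + 1) ^ (lam - 1)) volume (-1) T := by
  simpa using (intervalIntegral.intervalIntegrable_rpow' (a := 0) (b := T + 1)
    (by linarith : (-1 : ℝ) < lam - 1)).comp_add_right 1

lemma integral_add_one_rpow (hlam : 0 < lam) :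
    ∫ u in (-1 : ℝ)..T, (u + 1) ^ (lam - 1) = (T + 1) ^ lam / lam := by
  rw [intervalIntegral.integral_comp_add_right (fun u : ℝ => u ^ (lam - 1)),
    integral_rpow (Or.inl (by linarith))]
  simp [zero_rpow hlam.ne']

end AddOneRpow

lemma one_sub_sq_rpow_le_add_one_rpow {u s : ℝ} (hu : -1 < u) (hu0 : u ≤ 0) (hs : s ≤ 0) :
    (1 - u ^ 2) ^ s ≤ (u + 1) ^ s :=
  rpow_le_rpow_of_nonpos (by linarith) (by nlinarith) hs

lemma integral_one_sub_sq_rpow_le {lam T : ℝ} (hlam0 : 0 < lam) (hlam1 : lam ≤ 1)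
    (hT1 : -1 ≤ T) (hT0 : T ≤ 0) :
    ∫ u in (-1 : ℝ)..T, (1 - u ^ 2) ^ (lam - 1) ≤ (T + 1) ^ lam / lam := by
  rw [← integral_add_one_rpow hlam0, intervalIntegral.integral_of_le hT1,
    intervalIntegral.integral_of_le hT1]
  refine integral_mono_of_nonneg ?_ (intervalIntegrable_add_one_rpow hlam0).1 ?_ <;>
    filter_upwards [ae_restrict_mem measurableSet_Ioc] with u ⟨hu1, hu2⟩
  · exact rpow_nonneg (by nlinarith) _
  · exact one_sub_sq_rpow_le_add_one_rpow hu1 (hu2.trans hT0) (by linarith)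

noncomputable def negCosAngle (x r z : ℝ) : ℝ :=
  (cosh r - z * cosh x) / (√(z ^ 2 - 1) * sinh x)

section NegCosAngle

variable {x r z : ℝ}

lemma sq_cosh_sub_mul_cosh_le (h1 : cosh (x - r) ≤ z) (h2 : z ≤ cosh (x + r)) :
    (cosh r - z * cosh x) ^ 2 ≤ (z ^ 2 - 1) * sinh x ^ 2 := by
  rw [cosh_sub] at h1
  rw [cosh_add] at h2
  linear_combination mul_nonneg (sub_nonneg.2 h1) (sub_nonneg.2 h2)
    + (z ^ 2 - cosh r ^ 2) * cosh_sq x - sinh x ^ 2 * cosh_sq r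

lemma mul_sinh_sq_sub_sq_le (x r z : ℝ) :
    (z ^ 2 - 1) * sinh x ^ 2 - (cosh r - z * cosh x) ^ 2 ≤ (z ^ 2 - 1) * sinh r ^ 2 := by
  linear_combination sq_nonneg (z * cosh r - cosh x) + (1 - z ^ 2) * cosh_sq x
    + (z ^ 2 - 1) * cosh_sq r

lemma sq_negCosAngle_le_one (h1 : cosh (x - r) ≤ z) (h2 : z ≤ cosh (x + r)) :
    negCosAngle x r z ^ 2 ≤ 1 := by
  have hz : 1 ≤ z := (one_le_cosh _).trans h1
  rw [negCosAngle, div_pow, mul_pow, sq_sqrt (by nlinarith)]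
  exact div_le_one_of_le₀ (sq_cosh_sub_mul_cosh_le h1 h2) (mul_nonneg (by nlinarith) (sq_nonneg _))

lemma one_sub_sq_negCosAngle_le (hx : sinh x ≠ 0) (hz : 1 < z) :
    1 - negCosAngle x r z ^ 2 ≤ (sinh r / sinh x) ^ 2 := by
  have hD : 0 < (z ^ 2 - 1) * sinh x ^ 2 := mul_pos (by nlinarith) (by positivity)
  rw [negCosAngle, div_pow, mul_pow, sq_sqrt (by nlinarith), one_sub_div hD.ne', div_le_iff₀ hD]
  calc _ ≤ (z ^ 2 - 1) * sinh r ^ 2 := mul_sinh_sq_sub_sq_le x r z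
    _ = _ := by field_simp

lemma negCosAngle_nonpos (hx : 0 ≤ x) (hrx : cosh r ≤ cosh x) (hz : 1 ≤ z) :
    negCosAngle x r z ≤ 0 :=
  div_nonpos_of_nonpos_of_nonneg (by nlinarith [cosh_pos x])
    (mul_nonneg (sqrt_nonneg _) (sinh_nonneg_iff.2 hx))

end NegCosAngle

/-- Estimate (28): for `0 < r < x` and `cosh(x−r) ≤ z ≤ cosh(x+r)`,
`∫_{−1}^{(cosh r − z·cosh x)/(√(z²−1)·sinh x)} (1−u²)^{λ−1} du ≤ (1/λ)·(sinh r / sinh x)^{2λ}`. -/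
theorem inner_integral_estimate (lam x r z : ℝ) (hlam0 : 0 < lam) (hlam1 : lam < 1/2)
    (hr : 0 < r) (hx : r < x)
    (hz1 : Real.cosh (x - r) ≤ z) (hz2 : z ≤ Real.cosh (x + r)) :
    (∫ u in (-1:ℝ)..((Real.cosh r - z * Real.cosh x) / (Real.sqrt (z^2 - 1) * Real.sinh x)),
        (1 - u^2) ^ (lam - 1))
      ≤ (1/lam) * (Real.sinh r / Real.sinh x) ^ (2*lam) := by
  have hx0 : 0 < x := hr.trans hx
  have hz : 1 < z := (one_lt_cosh.2 (by linarith)).trans_le hz1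
  have hrx : cosh r ≤ cosh x := cosh_le_cosh.2 (abs_le_abs_of_nonneg hr.le hx.le)
  change ∫ u in (-1 : ℝ)..negCosAngle x r z, _ ≤ _
  set T := negCosAngle x r z
  have hT0 : T ≤ 0 := negCosAngle_nonpos hx0.le hrx hz.le
  have hT1 : -1 ≤ T := by nlinarith [sq_negCosAngle_le_one hz1 hz2]
  have hsine : T + 1 ≤ (sinh r / sinh x) ^ 2 := by
    nlinarith [one_sub_sq_negCosAngle_le (r := r) (sinh_pos_iff.2 hx0).ne' hz]
  calc _ ≤ (T + 1) ^ lam / lam := integral_one_sub_sq_rpow_le hlam0 (by linarith) hT1 hT0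
    _ ≤ ((sinh r / sinh x) ^ 2) ^ lam / lam := by gcongr; linarith
    _ = _ := by
      have hs : 0 ≤ sinh r / sinh x :=
        div_nonneg (sinh_nonneg_iff.2 hr.le) (sinh_nonneg_iff.2 hx0.le)
      rw [← rpow_natCast, ← rpow_mul hs]
      push_cast; ring
end

section
/- Let 0 < λ < 1/2, 1 ≤ p < ∞, 0 ≤ γ ≤ 2λ+1, and set α = (2λ+1−γ)/p. Then there exists a constant c_{λ,p} > 0 such that every measurable function f on [1,∞) satisfies sup_{x ≥ 0, r > 0} (sinh(r/2))^{α−2λ−1} ∫_0^r A^λ_{cosh t}|f|(cosh x) (sinh t)^{2λ} dt ≤ c_{λ,p} · sup_{x ≥ 0, r > 0} ( (sinh(r/2))^{−γ} ∫_0^r (A^λ_{cosh t}|f|(cosh x))^p (sinh t)^{2λ} dt )^{1/p}. (Lemma 3: the Morrey–Gegenbauer embedding L_{p,λ,γ} ⊂ L_{1,λ,2λ+1−α} with ‖f‖_{L_{1,λ,2λ+1−α}} ≤ c_{λ,p} ‖f‖_{L_{p,λ,γ}}.) -/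
open Real MeasureTheory Set ENNReal

/-- The normalizing constant `Γ(λ+1/2)/(Γ(1/2)Γ(λ))` of the Gegenbauer shift. -/
noncomputable def gegenC (lam : ℝ) : ℝ :=
  Real.Gamma (lam + 1/2) / (Real.Gamma (1/2) * Real.Gamma lam)

/-- The (ℝ≥0∞-valued) Gegenbauer generalized shift
`A^λ_{cosh t} f (cosh x) = c_λ ∫_0^π f(cosh x cosh t − sinh x sinh t cos φ)(sin φ)^{2λ−1} dφ`,
for nonnegative `f`; it may take the value `+∞`. -/
noncomputable def shiftE (lam : ℝ) (f : ℝ → ℝ) (x t : ℝ) : ℝ≥0∞ :=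
  ENNReal.ofReal (gegenC lam) *
    ∫⁻ φ in Set.Ioc (0:ℝ) Real.pi,
      ENNReal.ofReal
        (f (Real.cosh x * Real.cosh t - Real.sinh x * Real.sinh t * Real.cos φ) *
          Real.sin φ ^ (2*lam - 1))

/-!
Hölder's inequality for the measure `sinh^{2λ} t dt` on `(0, r]` bounds
`∫_0^r A^λ_{cosh t}|f|(cosh x) sinh^{2λ} t dt` by the `L^p` integral to the power `1/p` times
the weighted length of `(0, r]` to the power `1 - 1/p`. That length is at most
`r sinh^{2λ} r ≤ 2^{2λ+1} sinh^{2λ+1}(r/2) / (1/2 - λ)`, where the restriction `λ < 1/2` enters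
through `(1/2 - λ) r e^{λ r} ≤ 2 sinh(r/2)`. With `α = (2λ+1-γ)/p` the powers of `sinh(r/2)` on
the two sides then agree exactly.
-/

theorem lintegral_mul_le_weighted_Lp_mul_rpow_lintegral {α : Type*} [MeasurableSpace α]
    (μ : Measure α) {p : ℝ} (hp : 1 ≤ p) {g w : α → ℝ≥0∞} (hg : Measurable g) (hw : Measurable w) :
    ∫⁻ a, g a * w a ∂μ ≤
      (∫⁻ a, g a ^ p * w a ∂μ) ^ (1 / p) * (∫⁻ a, w a ∂μ) ^ (1 - 1 / p) := by
  have hp0 : 0 < p := one_pos.trans_le hp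
  have holder := eLpNorm_le_eLpNorm_mul_rpow_measure_univ (μ := μ.withDensity w)
    (p := 1) (q := ENNReal.ofReal p) (by simpa using hp) hg.aestronglyMeasurable
  rw [eLpNorm_one_eq_lintegral_enorm,
    eLpNorm_eq_lintegral_rpow_enorm_toReal (by simpa using hp0) ofReal_ne_top,
    withDensity_apply _ MeasurableSet.univ, Measure.restrict_univ, toReal_ofReal hp0.le,
    toReal_one] at holder
  simp only [enorm_eq_self, one_div_one] at holder
  rw [lintegral_withDensity_eq_lintegral_mul _ hw hg,
    lintegral_withDensity_eq_lintegral_mul _ hw (hg.pow_const p)] at holder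
  simpa only [Pi.mul_apply, mul_comm (w _)] using holder

lemma mul_exp_le_two_mul_sinh_half {a r : ℝ} (ha : -(1 / 2) ≤ a) (hr : 0 ≤ r) :
    (1 / 2 - a) * r * exp (a * r) ≤ 2 * sinh (r / 2) := by
  have hlin : (1 / 2 - a) * r ≤ exp ((1 / 2 - a) * r) - 1 := by
    linarith [add_one_le_exp ((1 / 2 - a) * r)]
  have hsplit : exp (a * r) * exp ((1 / 2 - a) * r) = exp (r / 2) := by
    rw [← exp_add]; ring_nf
  have hlow : exp (-(r / 2)) ≤ exp (a * r) := exp_le_exp.2 (by nlinarith)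
  calc (1 / 2 - a) * r * exp (a * r)
      ≤ (exp ((1 / 2 - a) * r) - 1) * exp (a * r) := by gcongr
    _ = exp (r / 2) - exp (a * r) := by rw [sub_mul, mul_comm, hsplit, one_mul]
    _ ≤ 2 * sinh (r / 2) := by rw [sinh_eq]; linarith

lemma mul_sinh_rpow_le {lam r : ℝ} (hlam0 : 0 ≤ lam) (hlam1 : lam < 1 / 2) (hr : 0 ≤ r) :
    r * sinh r ^ (2 * lam) ≤
      2 ^ (2 * lam + 1) / (1 / 2 - lam) * sinh (r / 2) ^ (2 * lam + 1) := by
  set s := sinh (r / 2)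
  have hs : 0 ≤ s := sinh_nonneg_iff.2 (by linarith)
  have hc : cosh (r / 2) ^ (2 * lam) ≤ exp (lam * r) := by
    calc cosh (r / 2) ^ (2 * lam) ≤ exp (r / 2) ^ (2 * lam) := by
          gcongr
          rw [cosh_eq]
          linarith [exp_le_exp.2 (by linarith : -(r / 2) ≤ r / 2)]
      _ = exp (lam * r) := by rw [← exp_mul]; ring_nf
  have hexp := mul_exp_le_two_mul_sinh_half (a := lam) (by linarith) hr
  calc r * sinh r ^ (2 * lam)
      = (2 * s) ^ (2 * lam) * (r * cosh (r / 2) ^ (2 * lam)) := by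
        have hsinh : sinh r = 2 * s * cosh (r / 2) := by rw [← sinh_two_mul]; ring_nf
        rw [hsinh, mul_rpow (by positivity) (cosh_pos _).le]
        ring
    _ ≤ (2 * s) ^ (2 * lam) * (r * exp (lam * r)) := by gcongr
    _ ≤ (2 * s) ^ (2 * lam) * (2 * s / (1 / 2 - lam)) := by
        gcongr
        rw [le_div_iff₀ (by linarith)]; linarith
    _ = 2 ^ (2 * lam + 1) / (1 / 2 - lam) * s ^ (2 * lam + 1) := by
        have h1 : 2 * lam + 1 ≠ 0 := by linarith
        rw [rpow_add' (by norm_num) h1, rpow_add' hs h1, mul_rpow (by norm_num) hs]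
        simp only [Real.rpow_one]
        ring

lemma setLIntegral_Ioc_sinh_rpow_le {lam r : ℝ} (hlam0 : 0 ≤ lam) (hlam1 : lam < 1 / 2)
    (hr : 0 ≤ r) :
    ∫⁻ t in Ioc 0 r, ENNReal.ofReal (sinh t ^ (2 * lam)) ≤
      ENNReal.ofReal (2 ^ (2 * lam + 1) / (1 / 2 - lam) * sinh (r / 2) ^ (2 * lam + 1)) := by
  have hmono : ∀ t ∈ Ioc 0 r,
      ENNReal.ofReal (sinh t ^ (2 * lam)) ≤ ENNReal.ofReal (sinh r ^ (2 * lam)) := fun t ht ↦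
    ENNReal.ofReal_le_ofReal <|
      rpow_le_rpow (sinh_nonneg_iff.2 ht.1.le) (sinh_le_sinh.2 ht.2) (by linarith)
  calc ∫⁻ t in Ioc 0 r, ENNReal.ofReal (sinh t ^ (2 * lam))
      ≤ ∫⁻ _ in Ioc 0 r, ENNReal.ofReal (sinh r ^ (2 * lam)) :=
        setLIntegral_mono measurable_const hmono
    _ = ENNReal.ofReal (r * sinh r ^ (2 * lam)) := by
        rw [setLIntegral_const, Real.volume_Ioc, sub_zero, mul_comm,
          ENNReal.ofReal_mul hr]
    _ ≤ _ := ENNReal.ofReal_le_ofReal (mul_sinh_rpow_le hlam0 hlam1 hr)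

lemma ofReal_rpow_mul_rpow_mul_ofReal_mul_rpow {s K d γ p : ℝ} (hs : 0 < s) (hK : 0 < K)
    (hp : 0 < p) (T : ℝ≥0∞) :
    ENNReal.ofReal (s ^ ((d - γ) / p - d)) *
        (T ^ (1 / p) * ENNReal.ofReal (K * s ^ d) ^ (1 - 1 / p)) =
      ENNReal.ofReal (K ^ (1 - 1 / p)) * (ENNReal.ofReal (s ^ (-γ)) * T) ^ (1 / p) := by
  have hS0 : ENNReal.ofReal s ≠ 0 := by simpa using hs
  have hexp : -γ * (1 / p) = ((d - γ) / p - d) + d * (1 - 1 / p) := by field_simp; ring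
  rw [ENNReal.ofReal_mul hK.le, ENNReal.mul_rpow_of_ne_top ofReal_ne_top ofReal_ne_top,
    ENNReal.mul_rpow_of_nonneg _ _ (by positivity), ← ofReal_rpow_of_pos hs,
    ← ofReal_rpow_of_pos hs, ← ofReal_rpow_of_pos hs, ofReal_rpow_of_pos hK, ← ENNReal.rpow_mul,
    ← ENNReal.rpow_mul, hexp, ENNReal.rpow_add _ _ hS0 ofReal_ne_top]
  ring

lemma measurable_shiftE (lam : ℝ) {f : ℝ → ℝ} (hf : Measurable f) (x : ℝ) :
    Measurable (shiftE lam f x) := by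
  refine (Measurable.lintegral_prod_right ?_).const_mul _
  exact ENNReal.measurable_ofReal.comp ((hf.comp (by fun_prop)).mul
    ((measurable_sin.comp measurable_snd).pow measurable_const))

lemma ofReal_sinh_rpow_mul_lintegral_le {lam p gam r : ℝ} (hlam0 : 0 ≤ lam)
    (hlam1 : lam < 1 / 2) (hp : 1 ≤ p) (hr : 0 < r) {g : ℝ → ℝ≥0∞} (hg : Measurable g) :
    ENNReal.ofReal (sinh (r / 2) ^ ((2 * lam + 1 - gam) / p - 2 * lam - 1)) *
        ∫⁻ t in Ioc 0 r, g t * ENNReal.ofReal (sinh t ^ (2 * lam)) ≤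
      ENNReal.ofReal ((2 ^ (2 * lam + 1) / (1 / 2 - lam)) ^ (1 - 1 / p)) *
        (ENNReal.ofReal (sinh (r / 2) ^ (-gam)) *
          ∫⁻ t in Ioc 0 r, g t ^ p * ENNReal.ofReal (sinh t ^ (2 * lam))) ^ (1 / p) := by
  have hs : 0 < sinh (r / 2) := sinh_pos_iff.2 (by linarith)
  have hK : 0 < 2 ^ (2 * lam + 1) / (1 / 2 - lam) := by
    have : 0 < 1 / 2 - lam := by linarith
    positivity
  have h1p : 0 ≤ 1 - 1 / p := sub_nonneg.2 ((div_le_one (by linarith)).2 hp)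
  rw [← ofReal_rpow_mul_rpow_mul_ofReal_mul_rpow hs hK (by linarith), sub_sub]
  gcongr
  refine (lintegral_mul_le_weighted_Lp_mul_rpow_lintegral _ hp hg (by fun_prop)).trans ?_
  gcongr
  exact setLIntegral_Ioc_sinh_rpow_le hlam0 hlam1 hr.le

theorem morrey_gegenbauer_embedding_general (lam p gam alpha : ℝ)
    (hlam0 : 0 < lam) (hlam1 : lam < 1/2) (hp : 1 ≤ p)
    (halpha : alpha = (2*lam + 1 - gam) / p) :
    ∃ c : ℝ, 0 < c ∧ ∀ f : ℝ → ℝ, Measurable f →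
      (⨆ (x : ℝ) (_ : 0 ≤ x) (r : ℝ) (_ : 0 < r),
          ENNReal.ofReal (Real.sinh (r/2) ^ (alpha - 2*lam - 1)) *
            ∫⁻ t in Set.Ioc (0:ℝ) r,
              shiftE lam (fun z => |f z|) x t * ENNReal.ofReal (Real.sinh t ^ (2*lam)))
        ≤ ENNReal.ofReal c *
          ⨆ (x : ℝ) (_ : 0 ≤ x) (r : ℝ) (_ : 0 < r),
            (ENNReal.ofReal (Real.sinh (r/2) ^ (-gam)) *
              ∫⁻ t in Set.Ioc (0:ℝ) r,
                (shiftE lam (fun z => |f z|) x t) ^ p *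
                  ENNReal.ofReal (Real.sinh t ^ (2*lam))) ^ (1/p) := by
  have hK : 0 < 2 ^ (2 * lam + 1) / (1 / 2 - lam) := by
    have : 0 < 1 / 2 - lam := by linarith
    positivity
  refine ⟨_, rpow_pos_of_pos hK (1 - 1 / p), fun f hf ↦ ?_⟩
  subst halpha
  refine iSup₂_le fun x hx ↦ iSup₂_le fun r hr ↦ ?_
  refine (ofReal_sinh_rpow_mul_lintegral_le hlam0.le hlam1 hp hr
    (measurable_shiftE lam hf.abs x)).trans ?_
  gcongr
  exact le_iSup₂_of_le (f := fun x (_ : 0 ≤ x) ↦ _) x hx (le_iSup₂_of_le r hr le_rfl)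

/-- Lemma 3 (Morrey–Gegenbauer embedding): for `1 ≤ p < ∞`, `0 ≤ γ ≤ 2λ+1` and
`α = (2λ+1−γ)/p`, one has `L_{p,λ,γ} ⊂ L_{1,λ,2λ+1−α}` with
`‖f‖_{L_{1,λ,2λ+1−α}} ≤ c_{λ,p} ‖f‖_{L_{p,λ,γ}}`. -/
theorem morrey_gegenbauer_embedding (lam p gam alpha : ℝ)
    (hlam0 : 0 < lam) (hlam1 : lam < 1/2) (hp : 1 ≤ p)
    (hg0 : 0 ≤ gam) (hg1 : gam ≤ 2*lam + 1) (halpha : alpha = (2*lam + 1 - gam) / p) :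
    ∃ c : ℝ, 0 < c ∧ ∀ f : ℝ → ℝ, Measurable f →
      (⨆ (x : ℝ) (_ : 0 ≤ x) (r : ℝ) (_ : 0 < r),
          ENNReal.ofReal (Real.sinh (r/2) ^ (alpha - 2*lam - 1)) *
            ∫⁻ t in Set.Ioc (0:ℝ) r,
              shiftE lam (fun z => |f z|) x t * ENNReal.ofReal (Real.sinh t ^ (2*lam)))
        ≤ ENNReal.ofReal c *
          ⨆ (x : ℝ) (_ : 0 ≤ x) (r : ℝ) (_ : 0 < r),
            (ENNReal.ofReal (Real.sinh (r/2) ^ (-gam)) *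
              ∫⁻ t in Set.Ioc (0:ℝ) r,
                (shiftE lam (fun z => |f z|) x t) ^ p *
                  ENNReal.ofReal (Real.sinh t ^ (2*lam))) ^ (1/p) :=
  morrey_gegenbauer_embedding_general lam p gam alpha hlam0 hlam1 hp halpha
end
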